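/- arXiv:0802.2121 — 10 statements merged into one kernel-verified Lean document; each statement's English description precedes it below -/
import Mathlib

section
/- Let A⁽¹⁾, A⁽²⁾ be real s×s matrices and b ∈ ℝˢ satisfying the symplecticity condition diag(b)·A⁽¹⁾ + (A⁽²⁾)ᵀ·diag(b) = b·bᵀ. Let z > 0 be such that I + z²A⁽²⁾A⁽¹⁾ is invertible (hence so is I + z²A⁽¹⁾A⁽²⁾), and define the row vectors D⁽¹⁾ = bᵀ(I + z²A⁽²⁾A⁽¹⁾)⁻¹ and D⁽²⁾ = bᵀ(I + z²A⁽¹⁾A⁽²⁾)⁻¹, and e = (1,…,1)ᵀ. Then z²·(D⁽¹⁾A⁽²⁾e − D⁽²⁾A⁽¹⁾e)² − 4·(D⁽¹⁾e)·(D⁽²⁾e) < 0 if and only if |(1 − z²·D⁽¹⁾A⁽²⁾e) + (1 − z²·D⁽²⁾A⁽¹⁾e)| < 2. -/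
open Matrix

private lemma sprk_aux (z α β p q : ℝ) (hz2 : (0:ℝ) < z ^ 2)
    (hkey : α + β - z ^ 2 * (α * β) = p * q) :
    z ^ 2 * (α - β) ^ 2 - 4 * (p * q) < 0 ↔
      |(1 - z ^ 2 * α) + (1 - z ^ 2 * β)| < 2 := by
  rw [abs_lt]
  have hPQ : p * q = α + β - z ^ 2 * (α * β) := hkey.symm
  have heq : z ^ 2 * (z ^ 2 * (α - β) ^ 2 - 4 * (p * q))
      = (z ^ 2 * α + z ^ 2 * β) * ((z ^ 2 * α + z ^ 2 * β) - 4) := by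
    rw [hPQ]; ring
  constructor
  · intro h
    have h2 : (z ^ 2 * α + z ^ 2 * β) * ((z ^ 2 * α + z ^ 2 * β) - 4) < 0 := by
      rw [← heq]; exact mul_neg_of_pos_of_neg hz2 h
    rcases mul_neg_iff.mp h2 with ⟨ha, hb⟩ | ⟨ha, hb⟩ <;> constructor <;> linarith
  · rintro ⟨h1, h2⟩
    have h3 : z ^ 2 * (z ^ 2 * (α - β) ^ 2 - 4 * (p * q)) < 0 := by
      rw [heq]; nlinarith
    by_contra hcon
    push_neg at hcon
    exact absurd h3 (not_lt.2 (mul_nonneg hz2.le hcon))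

/-- For a symplectic partitioned Runge–Kutta method, the ellipticity (negative discriminant)
condition for the fixed point of the discretized test system is equivalent to `|a₁ + a₂| < 2`
where `aᵢ = 1 − z²·D⁽ⁱ⁾A⁽³⁻ⁱ⁾e`. -/
theorem sprk_elliptic_condition_iff
    (s : ℕ) (A1 A2 : Matrix (Fin s) (Fin s) ℝ) (b : Fin s → ℝ)
    (hsymp : Matrix.diagonal b * A1 + A2ᵀ * Matrix.diagonal b = Matrix.vecMulVec b b)
    (z : ℝ) (hz : 0 < z)
    (hM : IsUnit (1 + z ^ 2 • (A2 * A1) : Matrix (Fin s) (Fin s) ℝ))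
    (e : Fin s → ℝ) (he : e = fun _ => 1)
    (D1 D2 : Fin s → ℝ)
    (hD1 : D1 = Matrix.vecMul b (1 + z ^ 2 • (A2 * A1))⁻¹)
    (hD2 : D2 = Matrix.vecMul b (1 + z ^ 2 • (A1 * A2))⁻¹) :
    z ^ 2 * (D1 ⬝ᵥ (A2 *ᵥ e) - D2 ⬝ᵥ (A1 *ᵥ e)) ^ 2
        - 4 * ((D1 ⬝ᵥ e) * (D2 ⬝ᵥ e)) < 0 ↔
      |(1 - z ^ 2 * (D1 ⬝ᵥ (A2 *ᵥ e))) + (1 - z ^ 2 * (D2 ⬝ᵥ (A1 *ᵥ e)))| < 2 := by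
  set M1 : Matrix (Fin s) (Fin s) ℝ := 1 + z ^ 2 • (A2 * A1) with hM1def
  set M2 : Matrix (Fin s) (Fin s) ℝ := 1 + z ^ 2 • (A1 * A2) with hM2def
  have hd1 : IsUnit M1.det := (Matrix.isUnit_iff_isUnit_det M1).mp hM
  have hdet : M2.det = M1.det := by
    have := Matrix.det_one_add_mul_comm A1 ((z ^ 2) • A2)
    simpa [hM1def, hM2def, mul_smul_comm, smul_mul_assoc] using this
  have hd2 : IsUnit M2.det := hdet ▸ hd1
  -- commutation
  have hc1 : A1 * M1 = M2 * A1 := by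
    simp [hM1def, hM2def, mul_add, add_mul, mul_smul_comm, smul_mul_assoc, mul_assoc]
  have hc2 : A2 * M2 = M1 * A2 := by
    simp [hM1def, hM2def, mul_add, add_mul, mul_smul_comm, smul_mul_assoc, mul_assoc]
  have hAN1 : A1 * M1⁻¹ = M2⁻¹ * A1 := by
    calc A1 * M1⁻¹ = M2⁻¹ * (M2 * A1) * M1⁻¹ := by
          rw [← mul_assoc, Matrix.nonsing_inv_mul _ hd2, one_mul]
    _ = M2⁻¹ * (A1 * M1) * M1⁻¹ := by rw [hc1]
    _ = M2⁻¹ * A1 := by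
          rw [mul_assoc, mul_assoc, Matrix.mul_nonsing_inv _ hd1, mul_one]
  have hAN2 : A2 * M2⁻¹ = M1⁻¹ * A2 := by
    calc A2 * M2⁻¹ = M1⁻¹ * (M1 * A2) * M2⁻¹ := by
          rw [← mul_assoc, Matrix.nonsing_inv_mul _ hd1, one_mul]
    _ = M1⁻¹ * (A2 * M2) * M2⁻¹ := by rw [hc2]
    _ = M1⁻¹ * A2 := by
          rw [mul_assoc, mul_assoc, Matrix.mul_nonsing_inv _ hd2, mul_one]
  -- expansions of inverses
  have hexp1 : M1⁻¹ = 1 - z ^ 2 • (A2 * (M2⁻¹ * A1)) := by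
    have h : (1 + z ^ 2 • (A2 * A1)) * M1⁻¹ = 1 := by
      rw [← hM1def]; exact Matrix.mul_nonsing_inv M1 hd1
    rw [add_mul, one_mul, smul_mul_assoc, mul_assoc, hAN1] at h
    exact (eq_sub_of_add_eq h).symm ▸ rfl
  have hexp2 : M2⁻¹ = 1 - z ^ 2 • (A1 * (M1⁻¹ * A2)) := by
    have h : (1 + z ^ 2 • (A1 * A2)) * M2⁻¹ = 1 := by
      rw [← hM2def]; exact Matrix.mul_nonsing_inv M2 hd2
    rw [add_mul, one_mul, smul_mul_assoc, mul_assoc, hAN2] at h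
    exact (eq_sub_of_add_eq h).symm ▸ rfl
  -- vectors
  set B : Matrix (Fin s) (Fin s) ℝ := Matrix.diagonal b with hBdef
  set u : Fin s → ℝ := M1⁻¹ *ᵥ (A2 *ᵥ e) with hu
  set v : Fin s → ℝ := M2⁻¹ *ᵥ (A1 *ᵥ e) with hv
  -- scalar rewrites
  have hdB : ∀ x w : Fin s → ℝ, x ⬝ᵥ (B *ᵥ w) = ∑ i, x i * (b i * w i) := by
    intro x w
    simp [dotProduct, Matrix.mulVec_diagonal, hBdef]
  have hBsym : ∀ x w : Fin s → ℝ, x ⬝ᵥ (B *ᵥ w) = w ⬝ᵥ (B *ᵥ x) := by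
    intro x w
    rw [hdB, hdB]
    exact Finset.sum_congr rfl fun i _ => by ring
  have heB : ∀ w : Fin s → ℝ, e ⬝ᵥ (B *ᵥ w) = b ⬝ᵥ w := by
    intro w
    rw [hdB, he]
    simp [dotProduct]
  -- symplecticity bilinear form
  have hentry : ∀ i j, b i * A1 i j + A2 j i * b j = b i * b j := by
    intro i j
    have h := congrFun (congrFun hsymp i) j
    simpa [hBdef, Matrix.add_apply, Matrix.diagonal_mul, Matrix.mul_diagonal,
      Matrix.transpose_apply, Matrix.vecMulVec_apply] using h
  have hS : ∀ x y : Fin s → ℝ,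
      x ⬝ᵥ (B *ᵥ (A1 *ᵥ y)) + y ⬝ᵥ (B *ᵥ (A2 *ᵥ x)) = (b ⬝ᵥ x) * (b ⬝ᵥ y) := by
    intro x y
    rw [hdB, hdB]
    have lhs1 : ∀ i, x i * (b i * (A1 *ᵥ y) i) = ∑ j, x i * y j * (b i * A1 i j) := by
      intro i
      simp [Matrix.mulVec, dotProduct, Finset.mul_sum]
      exact Finset.sum_congr rfl fun j _ => by ring
    have lhs2 : ∀ j, y j * (b j * (A2 *ᵥ x) j) = ∑ i, x i * y j * (A2 j i * b j) := by
      intro j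
      simp [Matrix.mulVec, dotProduct, Finset.mul_sum]
      exact Finset.sum_congr rfl fun i _ => by ring
    simp only [lhs1, lhs2]
    rw [show (∑ j, ∑ i, x i * y j * (A2 j i * b j))
        = ∑ i, ∑ j, x i * y j * (A2 j i * b j) from Finset.sum_comm]
    rw [← Finset.sum_add_distrib]
    simp only [← Finset.sum_add_distrib, ← mul_add, hentry]
    rw [dotProduct, dotProduct, Finset.sum_mul_sum]
    exact Finset.sum_congr rfl fun i _ => Finset.sum_congr rfl fun j _ => by ring
  -- key vector identities
  have hv1 : A1 *ᵥ (M1⁻¹ *ᵥ e) = v := by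
    rw [Matrix.mulVec_mulVec, hAN1, ← Matrix.mulVec_mulVec, hv]
  have hu1 : A2 *ᵥ (M2⁻¹ *ᵥ e) = u := by
    rw [Matrix.mulVec_mulVec, hAN2, ← Matrix.mulVec_mulVec, hu]
  have hexp1v : M1⁻¹ *ᵥ e = e - z ^ 2 • (A2 *ᵥ v) := by
    rw [hexp1, Matrix.sub_mulVec, Matrix.one_mulVec, Matrix.smul_mulVec,
      ← Matrix.mulVec_mulVec, ← Matrix.mulVec_mulVec, hv]
  have hexp2v : M2⁻¹ *ᵥ e = e - z ^ 2 • (A1 *ᵥ u) := by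
    rw [hexp2, Matrix.sub_mulVec, Matrix.one_mulVec, Matrix.smul_mulVec,
      ← Matrix.mulVec_mulVec, ← Matrix.mulVec_mulVec, hu]
  -- the determinant identity in scalar form
  set α : ℝ := b ⬝ᵥ u with hα
  set β : ℝ := b ⬝ᵥ v with hβ
  set p : ℝ := b ⬝ᵥ (M1⁻¹ *ᵥ e) with hp
  set q : ℝ := b ⬝ᵥ (M2⁻¹ *ᵥ e) with hq
  have hcross := hS v u
  have hmain := hS (M2⁻¹ *ᵥ e) (M1⁻¹ *ᵥ e)
  have hpq : q * p = b ⬝ᵥ (M2⁻¹ *ᵥ e) * b ⬝ᵥ (M1⁻¹ *ᵥ e) := rfl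
  rw [hv1, hu1, ← hpq] at hmain
  nth_rewrite 1 [hexp2v] at hmain
  nth_rewrite 1 [hexp1v] at hmain
  have hkey : α + β - z ^ 2 * (α * β) = p * q := by
    rw [sub_dotProduct, sub_dotProduct, smul_dotProduct,
      smul_dotProduct, heB, heB] at hmain
    rw [hBsym (A1 *ᵥ u) v, hBsym (A2 *ᵥ v) u] at hmain
    simp only [smul_eq_mul] at hmain
    linear_combination hmain + z ^ 2 * hcross
  -- reduce goal to α, β, p, q
  have hsc1 : D1 ⬝ᵥ (A2 *ᵥ e) = α := by
    rw [hD1, ← Matrix.dotProduct_mulVec, ← hu]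
  have hsc2 : D2 ⬝ᵥ (A1 *ᵥ e) = β := by
    rw [hD2, ← Matrix.dotProduct_mulVec, ← hv]
  have hsc3 : D1 ⬝ᵥ e = p := by
    rw [hD1, ← Matrix.dotProduct_mulVec]
  have hsc4 : D2 ⬝ᵥ e = q := by
    rw [hD2, ← Matrix.dotProduct_mulVec]
  rw [hsc1, hsc2, hsc3, hsc4]
  exact sprk_aux z α β p q (by positivity) hkey
end

section
/- Let A⁽¹⁾, A⁽²⁾ be real s×s matrices and b ∈ ℝˢ satisfying the symplecticity condition diag(b)·A⁽¹⁾ + (A⁽²⁾)ᵀ·diag(b) = b·bᵀ. Let z > 0 be such that I + z²A⁽²⁾A⁽¹⁾ is invertible, and define the row vectors D⁽¹⁾ = bᵀ(I + z²A⁽²⁾A⁽¹⁾)⁻¹ and D⁽²⁾ = bᵀ(I + z²A⁽¹⁾A⁽²⁾)⁻¹, and e = (1,…,1)ᵀ. Then (D⁽¹⁾e)·(D⁽²⁾e) = D⁽¹⁾A⁽²⁾e + D⁽²⁾A⁽¹⁾e − z²·(D⁽¹⁾A⁽²⁾e)·(D⁽²⁾A⁽¹⁾e); equivalently, the 2×2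 update matrix [[1 − z²·D⁽¹⁾A⁽²⁾e, −z·D⁽¹⁾e], [z·D⁽²⁾e, 1 − z²·D⁽²⁾A⁽¹⁾e]] has determinant 1. -/
/-!
Write `B(p, q) = ∑ bᵢ pᵢ qᵢ = b ⬝ᵥ (p * q)`; symplecticity says `B(p, A₁q) + B(A₂p, q) = (bᵀp)(bᵀq)`.
The stage vectors `x = M₁⁻¹e`, `y = M₂⁻¹e` (with `M₁ = I + z²A₂A₁`, `M₂ = I + z²A₁A₂`) satisfy
`x = e − z²A₂u`, `y = e − z²A₁v` for `u = A₁x`, `v = A₂y`. Hence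
`(bᵀx)(bᵀy) = B(y, u) + B(v, x) = bᵀu + bᵀv − z²(B(A₁v, u) + B(v, A₂u))`, and the bracket is
`(bᵀu)(bᵀv)` by symplecticity once more. Since `M₁⁻¹A₂ = A₂M₂⁻¹` and `M₂⁻¹A₁ = A₁M₁⁻¹`, the numbers
`D⁽¹⁾e, D⁽²⁾e, D⁽¹⁾A⁽²⁾e, D⁽²⁾A⁽¹⁾e` are `bᵀx, bᵀy, bᵀv, bᵀu`.
-/

open Matrix

section
variable {n R : Type*} [Fintype n] [DecidableEq n] [CommRing R]

theorem Matrix.det_one_add_smul_mul_comm (c : R) (A B : Matrix n n R) :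
    det (1 + c • (A * B)) = det (1 + c • (B * A)) := by
  rw [← smul_mul_assoc, det_one_add_mul_comm, mul_smul_comm]

theorem Matrix.one_add_smul_mul_mul_eq_mul (c : R) (A B : Matrix n n R) :
    (1 + c • (A * B)) * A = A * (1 + c • (B * A)) := by
  rw [Matrix.add_mul, Matrix.mul_add, Matrix.one_mul, Matrix.mul_one, smul_mul_assoc,
    mul_smul_comm, Matrix.mul_assoc]

/-- Holds without invertibility: by `det_one_add_smul_mul_comm` either both inverses are genuine
or both are the junk value `0`. -/
theorem Matrix.inv_one_add_smul_mul_mul_eq_mul (c : R) (A B : Matrix n n R) :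
    (1 + c • (A * B))⁻¹ * A = A * (1 + c • (B * A))⁻¹ := by
  by_cases h : IsUnit (1 + c • (A * B)).det
  · have h' : IsUnit (1 + c • (B * A)).det := det_one_add_smul_mul_comm c A B ▸ h
    let := (1 + c • (A * B)).invertibleOfIsUnitDet h
    let := (1 + c • (B * A)).invertibleOfIsUnitDet h'
    rw [inv_mul_eq_iff_eq_mul_of_invertible, ← Matrix.mul_assoc,
      one_add_smul_mul_mul_eq_mul, Matrix.mul_assoc, mul_inv_of_invertible, Matrix.mul_one]
  · have h' : ¬IsUnit (1 + c • (B * A)).det := det_one_add_smul_mul_comm c A B ▸ h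
    rw [nonsing_inv_apply_not_isUnit _ h, nonsing_inv_apply_not_isUnit _ h', Matrix.zero_mul,
      Matrix.mul_zero]

theorem Matrix.dotProduct_diagonal_mulVec (b p q : n → R) :
    p ⬝ᵥ (diagonal b *ᵥ q) = b ⬝ᵥ (p * q) := by
  simp only [dotProduct, mulVec_diagonal, Pi.mul_apply, mul_left_comm]

theorem dotProduct_mul_mulVec_add_mulVec_mul {b : n → R} {A1 A2 : Matrix n n R}
    (hsymp : diagonal b * A1 + A2ᵀ * diagonal b = vecMulVec b b) (p q : n → R) :
    b ⬝ᵥ (p * A1 *ᵥ q) + b ⬝ᵥ (A2 *ᵥ p * q) = (b ⬝ᵥ p) * (b ⬝ᵥ q) := by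
  have h := congrArg (fun M => p ⬝ᵥ M *ᵥ q) hsymp
  simp only [add_mulVec, ← mulVec_mulVec, dotProduct_add, dotProduct_diagonal_mulVec] at h
  rwa [dotProduct_mulVec p A2ᵀ, vecMul_transpose, dotProduct_diagonal_mulVec,
    dotProduct_mulVec, vecMul_vecMulVec, smul_dotProduct, smul_eq_mul, dotProduct_comm p] at h

theorem symplectic_stage_identity {b : n → R} {A1 A2 : Matrix n n R}
    (hsymp : diagonal b * A1 + A2ᵀ * diagonal b = vecMulVec b b) {c : R} {x y : n → R}
    (hx : (1 + c • (A2 * A1)) *ᵥ x = 1) (hy : (1 + c • (A1 * A2)) *ᵥ y = 1) :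
    (b ⬝ᵥ x) * (b ⬝ᵥ y) =
      b ⬝ᵥ (A2 *ᵥ y) + b ⬝ᵥ (A1 *ᵥ x) - c * (b ⬝ᵥ (A2 *ᵥ y)) * (b ⬝ᵥ (A1 *ᵥ x)) := by
  have hx' : x = 1 - c • (A2 *ᵥ A1 *ᵥ x) := by
    rw [← hx, add_mulVec, one_mulVec, smul_mulVec, mulVec_mulVec]; abel
  have hy' : y = 1 - c • (A1 *ᵥ A2 *ᵥ y) := by
    rw [← hy, add_mulVec, one_mulVec, smul_mulVec, mulVec_mulVec]; abel
  have hy_expand : b ⬝ᵥ ((1 - c • A1 *ᵥ A2 *ᵥ y) * A1 *ᵥ x) =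
      b ⬝ᵥ (A1 *ᵥ x) - c * b ⬝ᵥ (A1 *ᵥ A2 *ᵥ y * A1 *ᵥ x) := by
    rw [sub_mul, one_mul, smul_mul_assoc, dotProduct_sub, dotProduct_smul, smul_eq_mul]
  have hx_expand : b ⬝ᵥ (A2 *ᵥ y * (1 - c • A2 *ᵥ A1 *ᵥ x)) =
      b ⬝ᵥ (A2 *ᵥ y) - c * b ⬝ᵥ (A2 *ᵥ y * A2 *ᵥ A1 *ᵥ x) := by
    rw [mul_sub, mul_one, mul_smul_comm, dotProduct_sub, dotProduct_smul, smul_eq_mul]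
  rw [← hy'] at hy_expand
  rw [← hx'] at hx_expand
  have hyx := dotProduct_mul_mulVec_add_mulVec_mul hsymp y x
  have huv := dotProduct_mul_mulVec_add_mulVec_mul hsymp (A1 *ᵥ x) (A2 *ᵥ y)
  rw [mul_comm (A1 *ᵥ x), mul_comm (A2 *ᵥ A1 *ᵥ x)] at huv
  linear_combination -hyx + hy_expand + hx_expand - c * huv
end

theorem sprk_update_det_one_general
    (s : ℕ) (A1 A2 : Matrix (Fin s) (Fin s) ℝ) (b : Fin s → ℝ)
    (hsymp : Matrix.diagonal b * A1 + A2ᵀ * Matrix.diagonal b = Matrix.vecMulVec b b)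
    (z : ℝ)
    (hM : IsUnit (1 + z ^ 2 • (A2 * A1) : Matrix (Fin s) (Fin s) ℝ))
    (e : Fin s → ℝ) (he : e = fun _ => 1)
    (D1 D2 : Fin s → ℝ)
    (hD1 : D1 = Matrix.vecMul b (1 + z ^ 2 • (A2 * A1))⁻¹)
    (hD2 : D2 = Matrix.vecMul b (1 + z ^ 2 • (A1 * A2))⁻¹) :
    (D1 ⬝ᵥ e) * (D2 ⬝ᵥ e) =
        D1 ⬝ᵥ (A2 *ᵥ e) + D2 ⬝ᵥ (A1 *ᵥ e)
          - z ^ 2 * (D1 ⬝ᵥ (A2 *ᵥ e)) * (D2 ⬝ᵥ (A1 *ᵥ e)) ∧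
      Matrix.det !![1 - z ^ 2 * (D1 ⬝ᵥ (A2 *ᵥ e)), -z * (D1 ⬝ᵥ e);
                    z * (D2 ⬝ᵥ e), 1 - z ^ 2 * (D2 ⬝ᵥ (A1 *ᵥ e))] = 1 := by
  set M1 := (1 + z ^ 2 • (A2 * A1) : Matrix (Fin s) (Fin s) ℝ)
  set M2 := (1 + z ^ 2 • (A1 * A2) : Matrix (Fin s) (Fin s) ℝ)
  have hM1 : IsUnit M1.det := (isUnit_iff_isUnit_det M1).mp hM
  have hM2 : IsUnit M2.det := det_one_add_smul_mul_comm (z ^ 2) A2 A1 ▸ hM1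
  replace he : e = 1 := he
  subst he
  have hD1e : D1 ⬝ᵥ 1 = b ⬝ᵥ (M1⁻¹ *ᵥ 1) := by rw [hD1, dotProduct_mulVec]
  have hD2e : D2 ⬝ᵥ 1 = b ⬝ᵥ (M2⁻¹ *ᵥ 1) := by rw [hD2, dotProduct_mulVec]
  have hD1A : D1 ⬝ᵥ (A2 *ᵥ 1) = b ⬝ᵥ (A2 *ᵥ M2⁻¹ *ᵥ 1) := by
    rw [hD1, ← dotProduct_mulVec, mulVec_mulVec, mulVec_mulVec, inv_one_add_smul_mul_mul_eq_mul]
  have hD2A : D2 ⬝ᵥ (A1 *ᵥ 1) = b ⬝ᵥ (A1 *ᵥ M1⁻¹ *ᵥ 1) := by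
    rw [hD2, ← dotProduct_mulVec, mulVec_mulVec, mulVec_mulVec, inv_one_add_smul_mul_mul_eq_mul]
  have area := symplectic_stage_identity hsymp
    (by rw [mulVec_mulVec, mul_nonsing_inv _ hM1, one_mulVec] : M1 *ᵥ M1⁻¹ *ᵥ 1 = 1)
    (by rw [mulVec_mulVec, mul_nonsing_inv _ hM2, one_mulVec] : M2 *ᵥ M2⁻¹ *ᵥ 1 = 1)
  rw [hD1e, hD2e, hD1A, hD2A, det_fin_two_of]
  exact ⟨by linear_combination area, by linear_combination z ^ 2 * area⟩

/-- Symplecticity of a partitioned Runge–Kutta method implies the area-preservation identity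
`(D⁽¹⁾e)(D⁽²⁾e) = D⁽¹⁾A⁽²⁾e + D⁽²⁾A⁽¹⁾e − z²(D⁽¹⁾A⁽²⁾e)(D⁽²⁾A⁽¹⁾e)`, i.e. the one-step
update matrix has determinant `1`. -/
theorem sprk_update_det_one
    (s : ℕ) (A1 A2 : Matrix (Fin s) (Fin s) ℝ) (b : Fin s → ℝ)
    (hsymp : Matrix.diagonal b * A1 + A2ᵀ * Matrix.diagonal b = Matrix.vecMulVec b b)
    (z : ℝ) (hz : 0 < z)
    (hM : IsUnit (1 + z ^ 2 • (A2 * A1) : Matrix (Fin s) (Fin s) ℝ))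
    (e : Fin s → ℝ) (he : e = fun _ => 1)
    (D1 D2 : Fin s → ℝ)
    (hD1 : D1 = Matrix.vecMul b (1 + z ^ 2 • (A2 * A1))⁻¹)
    (hD2 : D2 = Matrix.vecMul b (1 + z ^ 2 • (A1 * A2))⁻¹) :
    (D1 ⬝ᵥ e) * (D2 ⬝ᵥ e) =
        D1 ⬝ᵥ (A2 *ᵥ e) + D2 ⬝ᵥ (A1 *ᵥ e)
          - z ^ 2 * (D1 ⬝ᵥ (A2 *ᵥ e)) * (D2 ⬝ᵥ (A1 *ᵥ e)) ∧
      Matrix.det !![1 - z ^ 2 * (D1 ⬝ᵥ (A2 *ᵥ e)), -z * (D1 ⬝ᵥ e);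
                    z * (D2 ⬝ᵥ e), 1 - z ^ 2 * (D2 ⬝ᵥ (A1 *ᵥ e))] = 1 :=
  sprk_update_det_one_general s A1 A2 b hsymp z hM e he D1 D2 hD1 hD2
end

section
/- Let A⁽¹⁾ = [[0,0,0],[5/24,1/3,−1/24],[1/6,2/3,1/6]] (3-stage Lobatto IIIA), A⁽²⁾ = [[1/6,−1/6,0],[1/6,1/3,0],[1/6,5/6,0]] (3-stage Lobatto IIIB), b = (1/6, 2/3, 1/6)ᵀ, and e = (1,1,1)ᵀ. Then for every real z with det(I + z²·A⁽²⁾A⁽¹⁾) ≠ 0, a₁ := det(I + z²·A⁽²⁾(A⁽¹⁾ − e·bᵀ))/det(I + z²·A⁽²⁾A⁽¹⁾) and a₂ := det(I + z²·A⁽¹⁾(A⁽²⁾ − e·bᵀ))/det(I + z²·A⁽¹⁾A⁽²⁾) are equal and both equal (1 − (11/24)z² + (1/48)z⁴)/(1 + (1/24)z²). -/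
open Matrix

/-- For the 3-stage Lobatto IIIA–Lobatto IIIB pair,
`a₁ = a₂ = (1 − (11/24)z² + (1/48)z⁴)/(1 + (1/24)z²)` whenever the denominator
`det(I + z²A⁽²⁾A⁽¹⁾)` is nonzero. -/
theorem lobatto3_a1_a2
    (A1 A2 : Matrix (Fin 3) (Fin 3) ℝ) (b e : Fin 3 → ℝ)
    (hA1 : A1 = !![0, 0, 0; 5/24, 1/3, -1/24; 1/6, 2/3, 1/6])
    (hA2 : A2 = !![1/6, -1/6, 0; 1/6, 1/3, 0; 1/6, 5/6, 0])
    (hb : b = ![1/6, 2/3, 1/6]) (he : e = ![1, 1, 1])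
    (z : ℝ) (hdet : (1 + z ^ 2 • (A2 * A1)).det ≠ 0)
    (a1 a2 : ℝ)
    (ha1 : a1 = (1 + z ^ 2 • (A2 * (A1 - Matrix.vecMulVec e b))).det
        / (1 + z ^ 2 • (A2 * A1)).det)
    (ha2 : a2 = (1 + z ^ 2 • (A1 * (A2 - Matrix.vecMulVec e b))).det
        / (1 + z ^ 2 • (A1 * A2)).det) :
    a1 = a2 ∧ a1 = (1 - 11/24 * z ^ 2 + 1/48 * z ^ 4) / (1 + 1/24 * z ^ 2) := by
  subst hA1 hA2 hb he ha1 ha2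
  have hden : (1 + z ^ 2 • ((!![1/6, -1/6, 0; 1/6, 1/3, 0; 1/6, 5/6, 0] : Matrix (Fin 3) (Fin 3) ℝ) * !![0, 0, 0; 5/24, 1/3, -1/24; 1/6, 2/3, 1/6])).det = 1 + 1/24 * z ^ 2 := by
    simp [Matrix.det_fin_three, Matrix.mul_apply, Fin.sum_univ_three, Matrix.one_apply,
      Matrix.vecMulVec_apply, Matrix.add_apply, Matrix.smul_apply, Matrix.sub_apply, Matrix.vecHead, Matrix.vecTail, Matrix.cons_val_zero, Matrix.cons_val_one, Matrix.head_cons, Function.comp]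
    ring
  rw [hden] at hdet ⊢
  have hden2 : (1 + z ^ 2 • ((!![0, 0, 0; 5/24, 1/3, -1/24; 1/6, 2/3, 1/6] : Matrix (Fin 3) (Fin 3) ℝ) * !![1/6, -1/6, 0; 1/6, 1/3, 0; 1/6, 5/6, 0])).det = 1 + 1/24 * z ^ 2 := by
    simp [Matrix.det_fin_three, Matrix.mul_apply, Fin.sum_univ_three, Matrix.one_apply,
      Matrix.vecMulVec_apply, Matrix.add_apply, Matrix.smul_apply, Matrix.sub_apply, Matrix.vecHead, Matrix.vecTail, Matrix.cons_val_zero, Matrix.cons_val_one, Matrix.head_cons, Function.comp]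
    ring
  rw [hden2]
  have hnum1 : (1 + z ^ 2 • ((!![1/6, -1/6, 0; 1/6, 1/3, 0; 1/6, 5/6, 0] : Matrix (Fin 3) (Fin 3) ℝ) * (!![0, 0, 0; 5/24, 1/3, -1/24; 1/6, 2/3, 1/6] - Matrix.vecMulVec ![1,1,1] ![1/6, 2/3, 1/6]))).det = 1 - 11/24 * z ^ 2 + 1/48 * z ^ 4 := by
    simp [Matrix.det_fin_three, Matrix.mul_apply, Fin.sum_univ_three, Matrix.one_apply,
      Matrix.vecMulVec_apply, Matrix.add_apply, Matrix.smul_apply, Matrix.sub_apply, Matrix.vecHead, Matrix.vecTail, Matrix.cons_val_zero, Matrix.cons_val_one, Matrix.head_cons, Function.comp]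
    ring
  have hnum2 : (1 + z ^ 2 • ((!![0, 0, 0; 5/24, 1/3, -1/24; 1/6, 2/3, 1/6] : Matrix (Fin 3) (Fin 3) ℝ) * (!![1/6, -1/6, 0; 1/6, 1/3, 0; 1/6, 5/6, 0] - Matrix.vecMulVec ![1,1,1] ![1/6, 2/3, 1/6]))).det = 1 - 11/24 * z ^ 2 + 1/48 * z ^ 4 := by
    simp [Matrix.det_fin_three, Matrix.mul_apply, Fin.sum_univ_three, Matrix.one_apply,
      Matrix.vecMulVec_apply, Matrix.add_apply, Matrix.smul_apply, Matrix.sub_apply, Matrix.vecHead, Matrix.vecTail, Matrix.cons_val_zero, Matrix.cons_val_one, Matrix.head_cons, Function.comp]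
    ring
  rw [hnum1, hnum2]
  exact ⟨rfl, rfl⟩
end

section
/- Define a₁(z) = (1 − (11/24)z² + (1/48)z⁴)/(1 + (1/24)z²) for z ∈ ℝ. Then |a₁(z)| < 1 for all z with 0 < z < 2√2, and a₁(2√2) = −1. -/
/-- For the 3-stage Lobatto IIIA–Lobatto IIIB pair, the elliptic structure-preservation
region is `0 < z < √8 = 2√2`: `|a₁(z)| < 1` on that interval and `a₁(2√2) = −1`. -/
theorem lobatto3_structure_region
    (a1 : ℝ → ℝ)
    (ha1 : ∀ z : ℝ, a1 z = (1 - 11/24 * z ^ 2 + 1/48 * z ^ 4) / (1 + 1/24 * z ^ 2)) :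
    (∀ z : ℝ, 0 < z → z < 2 * Real.sqrt 2 → |a1 z| < 1) ∧
      a1 (2 * Real.sqrt 2) = -1 := by
  have hs : (2 * Real.sqrt 2) ^ 2 = 8 := by
    have : Real.sqrt 2 ^ 2 = 2 := Real.sq_sqrt (by norm_num)
    nlinarith
  constructor
  · intro z hz hz2
    have ht : z ^ 2 < 8 := by
      have h : z ^ 2 < (2 * Real.sqrt 2) ^ 2 := by
        have h2 : (0:ℝ) < 2 * Real.sqrt 2 := by positivity
        nlinarith
      linarith [hs ▸ h]
    have ht0 : 0 < z ^ 2 := by positivity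
    have hd : (0:ℝ) < 1 + 1/24 * z ^ 2 := by nlinarith
    rw [ha1, abs_lt]
    constructor
    · rw [lt_div_iff₀ hd]; nlinarith [sq_nonneg (z^2 - 10)]
    · rw [div_lt_iff₀ hd]; nlinarith
  · rw [ha1, hs]
    have : (2 * Real.sqrt 2) ^ 4 = 64 := by nlinarith
    rw [this]
    norm_num
end

section
/- Define a₁(z) = (1 − (7/15)z² + (23/900)z⁴ − (1/3600)z⁶)/(1 + (1/30)z² + (1/1800)z⁴) for z ∈ ℝ. Then |a₁(z)| < 1 for all z with 0 < z < √(42 − 6√29), and a₁(√(42 − 6√29)) = −1. -/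
/-- For the 4-stage Lobatto IIIA–Lobatto IIIB pair, the elliptic structure-preservation
region is `0 < z < √(42 − 6√29)`: `|a₁(z)| < 1` on that interval and `a₁` equals `−1`
at the right endpoint. -/
theorem lobatto4_structure_region
    (a1 : ℝ → ℝ)
    (ha1 : ∀ z : ℝ, a1 z =
      (1 - 7/15 * z ^ 2 + 23/900 * z ^ 4 - 1/3600 * z ^ 6)
        / (1 + 1/30 * z ^ 2 + 1/1800 * z ^ 4)) :
    (∀ z : ℝ, 0 < z → z < Real.sqrt (42 - 6 * Real.sqrt 29) → |a1 z| < 1) ∧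
      a1 (Real.sqrt (42 - 6 * Real.sqrt 29)) = -1 := by
  set s := Real.sqrt 29 with hs
  have hs2 : s ^ 2 = 29 := Real.sq_sqrt (by norm_num)
  have hs0 : 0 ≤ s := Real.sqrt_nonneg 29
  have hs7 : s < 7 := by nlinarith
  have hs5 : (16:ℝ)/3 < s := by nlinarith
  have hne : 0 ≤ 42 - 6 * s := by linarith
  set r := Real.sqrt (42 - 6 * s) with hr
  have hr2 : r ^ 2 = 42 - 6 * s := Real.sq_sqrt hne
  have hr0 : 0 ≤ r := Real.sqrt_nonneg _
  constructor
  · intro z hz hzr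
    have ht : z ^ 2 < 42 - 6 * s := by
      calc z ^ 2 < r ^ 2 := by nlinarith
        _ = 42 - 6 * s := hr2
    have ht0 : 0 < z ^ 2 := by positivity
    have ht10 : z ^ 2 < 10 := by linarith
    have hD : (0:ℝ) < 1 + 1/30 * z ^ 2 + 1/1800 * z ^ 4 := by positivity
    rw [ha1, abs_lt]
    constructor
    · rw [lt_div_iff₀ hD]
      -- need -(D) < N, i.e. N + D > 0, i.e. (t-10)(t²-84t+720) < 0 with t = z²
      nlinarith [mul_pos (mul_pos (sub_pos.mpr ht) (by nlinarith : (0:ℝ) < 42 + 6*s - z^2)) (sub_pos.mpr ht10), sq_nonneg z, hs2]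
    · rw [div_lt_one hD]
      nlinarith [mul_pos (mul_pos ht0 (by nlinarith : (0:ℝ) < 30 - z^2)) (by nlinarith : (0:ℝ) < 60 - z^2)]
  · rw [ha1]
    have hD : (0:ℝ) < 1 + 1/30 * r ^ 2 + 1/1800 * r ^ 4 := by positivity
    rw [div_eq_iff (ne_of_gt hD)]
    have h4 : r ^ 4 = (42 - 6*s)^2 := by rw [show r^4 = (r^2)^2 by ring, hr2]
    have h6 : r ^ 6 = (42 - 6*s)^3 := by rw [show r^6 = (r^2)^3 by ring, hr2]
    rw [hr2, h4, h6]
    nlinarith [hs2]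
end

section
/- Let γ₁ = 1/(2 − 2^{1/3}) and γ₂ = 2^{1/3}/(2 − 2^{1/3}). Then for z > 0, the inequality 0 < ((1 − γ₁z)²(1 − γ₂z)) / ((1 + γ₁z)²(1 + γ₂z)) < 1 holds if and only if 0 < z < (2 − 2^{1/3})/2^{1/3}. -/
/-- For the 4th-order symmetric composition of the midpoint rule with
`γ₁ = 1/(2 − 2^{1/3})`, `γ₂ = 2^{1/3}/(2 − 2^{1/3})`, and `z > 0`, the `p`-multiplier
`(1 − γ₁z)²(1 − γ₂z)/((1 + γ₁z)²(1 + γ₂z))` lies strictly between `0` and `1` iff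
`0 < z < (2 − 2^{1/3})/2^{1/3}`. -/
theorem composition_hyperbolic_region
    (c γ₁ γ₂ : ℝ) (hc : c = (2 : ℝ) ^ ((1 : ℝ) / 3))
    (hγ₁ : γ₁ = 1 / (2 - c)) (hγ₂ : γ₂ = c / (2 - c))
    (z : ℝ) (hz : 0 < z) :
    (0 < ((1 - γ₁ * z) ^ 2 * (1 - γ₂ * z)) / ((1 + γ₁ * z) ^ 2 * (1 + γ₂ * z)) ∧
        ((1 - γ₁ * z) ^ 2 * (1 - γ₂ * z)) / ((1 + γ₁ * z) ^ 2 * (1 + γ₂ * z)) < 1) ↔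
      (0 < z ∧ z < (2 - c) / c) := by
  have h2 : (1:ℝ) < 2 := one_lt_two
  have hc1 : 1 < c := by
    rw [hc]
    exact Real.one_lt_rpow_iff_of_pos two_pos |>.2 (Or.inl ⟨h2, by norm_num⟩)
  have hc2 : c < 2 := by
    rw [hc]
    nth_rewrite 2 [show (2:ℝ) = 2 ^ (1:ℝ) by simp]
    exact (Real.rpow_lt_rpow_left_iff h2).2 (by norm_num)
  have h2c : 0 < 2 - c := by linarith
  have hc0 : 0 < c := by linarith
  have hg1 : 0 < γ₁ := by rw [hγ₁]; positivity
  have hg2 : 0 < γ₂ := by rw [hγ₂]; positivity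
  have hden : 0 < (1 + γ₁ * z) ^ 2 * (1 + γ₂ * z) := by positivity
  have key : z < (2 - c) / c ↔ 0 < 1 - γ₂ * z := by
    rw [hγ₂, lt_div_iff₀ hc0]
    constructor
    · intro h
      have : c / (2 - c) * z < 1 := by
        rw [div_mul_eq_mul_div, div_lt_one h2c]; linarith [mul_comm z c]
      linarith
    · intro h
      have h' : c / (2 - c) * z < 1 := by linarith
      rw [div_mul_eq_mul_div, div_lt_one h2c] at h'
      linarith [mul_comm c z]
  constructor
  · rintro ⟨hpos, _⟩
    refine ⟨hz, key.2 ?_⟩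
    have hnum : 0 < (1 - γ₁ * z) ^ 2 * (1 - γ₂ * z) := by
      by_contra hle
      push_neg at hle
      have := div_nonpos_of_nonpos_of_nonneg hle hden.le
      linarith
    nlinarith [sq_nonneg (1 - γ₁ * z)]
  · rintro ⟨_, hlt⟩
    have hb : 0 < 1 - γ₂ * z := key.1 hlt
    have hgg : γ₁ < γ₂ := by
      rw [hγ₁, hγ₂]
      exact (div_lt_div_iff_of_pos_right h2c).2 hc1
    have ha : 0 < 1 - γ₁ * z := by
      have : γ₁ * z < γ₂ * z := mul_lt_mul_of_pos_right hgg hz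
      linarith
    refine ⟨div_pos (by positivity) hden, ?_⟩
    rw [div_lt_one hden]
    nlinarith [mul_pos hg1 hz, mul_pos hg2 hz,
      mul_nonneg (mul_pos hg2 hz).le (sq_nonneg (γ₁ * z))]
end

section
/- Fix an integer s ≥ 2 and set ξ_k = 1/(2√(4k² − 1)) for k = 1,…,s−1. Let X₁ be the s×s matrix with (1,1)-entry 1/2, subdiagonal entries (X₁)_{k+1,k} = ξ_k for k = 1,…,s−1, superdiagonal entries (X₁)_{k,k+1} = −ξ_k for k = 1,…,s−2, and all other entries 0; let X₂ be the s×s matrix with (1,1)-entry 1/2, subdiagonal entries (X₂)_{k+1,k} = ξ_k for k = 1,…,s−2, superdiagonal entries (X₂)_{k,k+1} = −ξ_k for k = 1,…,s−1, and all other entries 0. Then det(I − zX₁) = det(I − zX₂) for every real z. -/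
open Matrix

/-- For the W-transformed `s`-stage Lobatto IIIA and Lobatto IIIB coefficient matrices
`X₁` and `X₂` (with `ξ_k = 1/(2√(4k² − 1))`), `det(I − zX₁) = det(I − zX₂)` for all `z`. -/
theorem lobatto_W_det_eq
    (s : ℕ) (hs : 2 ≤ s) (ξ : ℕ → ℝ)
    (hξ : ∀ k : ℕ, ξ k = 1 / (2 * Real.sqrt (4 * (k : ℝ) ^ 2 - 1)))
    (X1 X2 : Matrix (Fin s) (Fin s) ℝ)
    (hX1 : ∀ i j : Fin s, X1 i j =
      if (i : ℕ) = 0 ∧ (j : ℕ) = 0 then 1 / 2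
      else if (i : ℕ) = (j : ℕ) + 1 then ξ ((j : ℕ) + 1)
      else if (j : ℕ) = (i : ℕ) + 1 ∧ (j : ℕ) < s - 1 then -ξ ((i : ℕ) + 1)
      else 0)
    (hX2 : ∀ i j : Fin s, X2 i j =
      if (i : ℕ) = 0 ∧ (j : ℕ) = 0 then 1 / 2
      else if (i : ℕ) = (j : ℕ) + 1 ∧ (i : ℕ) < s - 1 then ξ ((j : ℕ) + 1)
      else if (j : ℕ) = (i : ℕ) + 1 then -ξ ((i : ℕ) + 1)
      else 0)
    (z : ℝ) :
    (1 - z • X1).det = (1 - z • X2).det := by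
  classical
  set D : Matrix (Fin s) (Fin s) ℝ := Matrix.diagonal (fun i => (-1 : ℝ) ^ (i : ℕ)) with hD
  have hodd : ∀ n : ℕ, (-1 : ℝ) ^ (2 * n + 1) = -1 := fun n =>
    Odd.neg_one_pow ⟨n, by ring⟩
  have key : ∀ i j : Fin s, X1 i j = (-1 : ℝ) ^ ((i : ℕ) + (j : ℕ)) * X2 j i := by
    intro i j
    rw [hX1, hX2]
    split_ifs with h1 h2 h3 h4 h5 h6 h7 h8 h9 h10 h11 h12 <;> try omega
    · obtain ⟨hi, hj⟩ := h1; simp [hi, hj]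
    · rw [show (i : ℕ) + (j : ℕ) = 2 * (j : ℕ) + 1 by omega, hodd]; ring
    · rw [show (i : ℕ) + (j : ℕ) = 2 * (i : ℕ) + 1 by omega, hodd]; ring
    all_goals simp
  have hmat : (1 - z • X1) = D * (1 - z • X2)ᵀ * D := by
    ext i j
    simp only [Matrix.mul_diagonal, Matrix.diagonal_mul, Matrix.transpose_apply,
      Matrix.sub_apply, Matrix.smul_apply, Matrix.one_apply, smul_eq_mul, hD]
    rw [key i j]
    rcases eq_or_ne i j with h | h
    · subst h
      simp only [if_pos rfl, if_true]
      have hp : (-1 : ℝ) ^ (i : ℕ) * (-1 : ℝ) ^ (i : ℕ) = 1 := by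
        rw [← pow_add, ← two_mul, pow_mul]; norm_num
      linear_combination -hp
    · have h' : j ≠ i := fun hc => h hc.symm
      simp only [if_neg h, if_neg h']
      ring
  have hDD : D * D = 1 := by
    rw [hD, Matrix.diagonal_mul_diagonal]
    convert Matrix.diagonal_one
    rw [← pow_add, ← two_mul, pow_mul]
    norm_num
  have hdet : D.det * D.det = 1 := by
    rw [← Matrix.det_mul, hDD, Matrix.det_one]
  rw [hmat, Matrix.det_mul, Matrix.det_mul, Matrix.det_transpose]
  calc D.det * (1 - z • X2).det * D.det
      = (D.det * D.det) * (1 - z • X2).det := by ring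
    _ = (1 - z • X2).det := by rw [hdet, one_mul]
end

section
/- Let 0 < z < 1 and let the sequence (p_l) satisfy p_{l+1} = p_l + z·p_l·(1 − p_l) with 0 < p₀ < (1 + z)/(2z). Then p_l → 1 as l → ∞. -/
open Filter

/-- For `0 < z < 1`, the logistic-type recurrence `p_{l+1} = p_l + z·p_l(1 − p_l)` with
`0 < p₀ < (1 + z)/(2z)` converges to `1`. -/
theorem euler_logistic_p_tendsto_one
    (z : ℝ) (hz0 : 0 < z) (hz1 : z < 1)
    (p : ℕ → ℝ)
    (hrec : ∀ l : ℕ, p (l + 1) = p l + z * p l * (1 - p l))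
    (hp0 : 0 < p 0) (hp0' : p 0 < (1 + z) / (2 * z)) :
    Tendsto p atTop (nhds 1) := by
  have hbound : p 0 * (2 * z) < 1 + z :=
    (lt_div_iff₀ (by positivity : (0:ℝ) < 2 * z)).mp hp0'
  -- any limit is a fixed point
  have fixedpt : ∀ L : ℝ, Tendsto p atTop (nhds L) → L * (1 - L) = 0 := by
    intro L hL
    have h1 : Tendsto (fun l => p (l + 1)) atTop (nhds L) :=
      hL.comp (tendsto_add_atTop_nat 1)
    have h2 : Tendsto (fun l => p l + z * p l * (1 - p l)) atTop
        (nhds (L + z * L * (1 - L))) :=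
      hL.add ((tendsto_const_nhds.mul hL).mul (tendsto_const_nhds.sub hL))
    have h1' : Tendsto (fun l => p l + z * p l * (1 - p l)) atTop (nhds L) := by
      simpa only [hrec] using h1
    have heq := tendsto_nhds_unique h1' h2
    have hz : z * (L * (1 - L)) = 0 := by nlinarith
    rcases mul_eq_zero.mp hz with h | h
    · exact absurd h (ne_of_gt hz0)
    · exact h
  rcases le_or_gt (p 0) 1 with hc | hc
  · -- case p 0 ≤ 1 : increasing, bounded above by 1
    have inv : ∀ l, 0 < p l ∧ p l ≤ 1 := by
      intro l
      induction l with
      | zero => exact ⟨hp0, hc⟩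
      | succ n ih =>
        obtain ⟨h1, h2⟩ := ih
        rw [hrec]
        constructor
        · nlinarith [mul_nonneg (mul_nonneg hz0.le h1.le) (sub_nonneg.mpr h2)]
        · nlinarith [mul_nonneg (sub_nonneg.mpr h2) (by nlinarith : (0:ℝ) ≤ 1 - z * p n)]
    have mono : Monotone p := monotone_nat_of_le_succ fun n => by
      rw [hrec]
      nlinarith [mul_nonneg (mul_nonneg hz0.le (inv n).1.le) (sub_nonneg.mpr (inv n).2)]
    have bdd : BddAbove (Set.range p) := ⟨1, by rintro x ⟨n, rfl⟩; exact (inv n).2⟩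
    have hL : Tendsto p atTop (nhds (⨆ n, p n)) := tendsto_atTop_ciSup mono bdd
    have hL0 : 0 < ⨆ n, p n := lt_of_lt_of_le hp0 (le_ciSup bdd 0)
    have hfx := fixedpt _ hL
    have hone : (⨆ n, p n) = 1 := by
      rcases mul_eq_zero.mp hfx with h | h
      · linarith
      · linarith
    rwa [hone] at hL
  · -- case 1 < p 0 : decreasing, bounded below by 1
    have inv : ∀ l, 1 < p l ∧ p l ≤ p 0 := by
      intro l
      induction l with
      | zero => exact ⟨hc, le_refl _⟩
      | succ n ih =>
        obtain ⟨h1, h2⟩ := ih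
        have hzp : z * p n < 1 := by nlinarith
        rw [hrec]
        constructor
        · nlinarith [mul_pos (sub_pos.mpr h1) (sub_pos.mpr hzp)]
        · nlinarith [mul_nonneg (mul_nonneg hz0.le (by linarith : (0:ℝ) ≤ p n))
            (by linarith : (0:ℝ) ≤ p n - 1)]
    have anti : Antitone p := antitone_nat_of_succ_le fun n => by
      rw [hrec]
      nlinarith [mul_nonneg (mul_nonneg hz0.le (by linarith [(inv n).1] : (0:ℝ) ≤ p n))
        (by linarith [(inv n).1] : (0:ℝ) ≤ p n - 1)]
    have bdd : BddBelow (Set.range p) := ⟨1, by rintro x ⟨n, rfl⟩; exact (inv n).1.le⟩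
    have hL : Tendsto p atTop (nhds (⨅ n, p n)) := tendsto_atTop_ciInf anti bdd
    have hL0 : 1 ≤ ⨅ n, p n := le_ciInf fun n => (inv n).1.le
    have hfx := fixedpt _ hL
    have hone : (⨅ n, p n) = 1 := by
      rcases mul_eq_zero.mp hfx with h | h
      · linarith
      · linarith
    rwa [hone] at hL
end

section
/- Let 0 < z < 1 and let the sequences (p_l), (q_l) satisfy p_{l+1} = p_l + z·p_l·(1 − p_l) and q_{l+1} = q_l/(1 + z − 2z·p_l), with 0 < p₀ < (1 + z)/(2z) and q₀ > 0. Then q_l → +∞ as l → ∞. -/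
open Filter

/-- For `0 < z < 1`, the symplectic Euler recurrences `p_{l+1} = p_l + z·p_l(1 − p_l)`,
`q_{l+1} = q_l/(1 + z − 2z·p_l)` with `0 < p₀ < (1 + z)/(2z)` and `q₀ > 0` satisfy
`q_l → +∞`. -/
theorem euler_logistic_q_tendsto_atTop
    (z : ℝ) (hz0 : 0 < z) (hz1 : z < 1)
    (p q : ℕ → ℝ)
    (hprec : ∀ l : ℕ, p (l + 1) = p l + z * p l * (1 - p l))
    (hqrec : ∀ l : ℕ, q (l + 1) = q l / (1 + z - 2 * z * p l))
    (hp0 : 0 < p 0) (hp0' : p 0 < (1 + z) / (2 * z)) (hq0 : 0 < q 0) :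
    Tendsto q atTop atTop := by
  set M : ℝ := max (p 0) 1 with hM
  have hz2 : (0:ℝ) < 2 * z := by linarith
  have h12 : (1:ℝ) < (1 + z) / (2 * z) := by
    rw [lt_div_iff₀ hz2]; nlinarith
  have hM2 : M < (1 + z) / (2 * z) := by
    rw [hM, max_lt_iff]; exact ⟨hp0', h12⟩
  have hMz : M < 1 / z := by
    have : (1 + z) / (2 * z) < 1 / z := by
      rw [div_lt_div_iff₀ hz2 hz0]; nlinarith
    linarith
  -- invariant
  have hinv : ∀ l, 0 < p l ∧ p l ≤ M := by
    intro l; induction l with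
    | zero => exact ⟨hp0, le_max_left _ _⟩
    | succ n ih =>
      obtain ⟨h1, h2⟩ := ih
      rw [hprec]
      rcases le_or_gt (p n) 1 with h | h
      · have hnn : 0 ≤ z * p n * (1 - p n) :=
          mul_nonneg (mul_nonneg hz0.le h1.le) (by linarith)
        refine ⟨by linarith, ?_⟩
        have hzp : z * p n ≤ z := by nlinarith
        have : p n + z * p n * (1 - p n) ≤ 1 := by
          nlinarith [mul_nonneg (show (0:ℝ) ≤ 1 - p n by linarith)
            (show (0:ℝ) ≤ 1 - z * p n by linarith)]
        exact this.trans (le_max_right _ _)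
      · have hzp : z * p n < 1 := by
          have := lt_of_le_of_lt h2 hMz
          rw [lt_div_iff₀ hz0] at this; nlinarith
        have hneg : 0 < z * p n * (p n - 1) :=
          mul_pos (mul_pos hz0 h1) (by linarith)
        have hgt1 : 0 < (p n - 1) * (1 - z * p n) :=
          mul_pos (by linarith) (by linarith)
        constructor
        · nlinarith
        · nlinarith
  have hpers : ∀ l, 3/4 ≤ p l → 3/4 ≤ p (l + 1) := by
    intro l h
    obtain ⟨h1, h2⟩ := hinv l
    rw [hprec]
    rcases le_or_gt (p l) 1 with hl | hl
    · nlinarith [mul_nonneg (mul_nonneg hz0.le h1.le) (show (0:ℝ) ≤ 1 - p l by linarith)]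
    · have hzp : z * p l < 1 := by
        have := lt_of_le_of_lt h2 hMz
        rw [lt_div_iff₀ hz0] at this; nlinarith
      nlinarith [mul_pos (show (0:ℝ) < p l - 1 by linarith)
        (show (0:ℝ) < 1 - z * p l by linarith)]
  -- eventually p ≥ 3/4
  have hexN : ∃ N, 3/4 ≤ p N := by
    rcases le_or_gt (3/4) (p 0) with h | h
    · exact ⟨0, h⟩
    · set δ : ℝ := z * p 0 / 4 with hδdef
      have hδ : 0 < δ := by positivity
      have key : ∀ l : ℕ, 3/4 ≤ p l ∨ p 0 + l * δ ≤ p l := by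
        intro l; induction l with
        | zero => right; simp
        | succ n ih =>
          rcases ih with h34 | hge
          · left; exact hpers n h34
          · rcases le_or_gt (3/4) (p n) with h34 | h34
            · left; exact hpers n h34
            · right
              have hn0 : (0:ℝ) ≤ (n:ℝ) * δ := by positivity
              have hp0n : p 0 ≤ p n := by linarith
              obtain ⟨h1, h2⟩ := hinv n
              rw [hprec]
              push_cast
              have hstep : z * p 0 * (1/4) ≤ z * p n * (1 - p n) :=
                mul_le_mul (by nlinarith) (by linarith) (by norm_num)
                  (mul_nonneg hz0.le h1.le)
              have : δ ≤ z * p n * (1 - p n) := by rw [hδdef]; linarith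
              linarith
      obtain ⟨N, hN⟩ := exists_nat_ge ((3/4 - p 0) / δ)
      rcases key N with h34 | hge
      · exact ⟨N, h34⟩
      · refine ⟨N, ?_⟩
        rw [div_le_iff₀ hδ] at hN
        linarith
  obtain ⟨N, hN⟩ := hexN
  have hp34 : ∀ l, N ≤ l → 3/4 ≤ p l := by
    intro l hl
    induction l, hl using Nat.le_induction with
    | base => exact hN
    | succ n hn ih => exact hpers n ih
  -- denominator bounds
  have hd0 : ∀ l, 0 < 1 + z - 2 * z * p l := by
    intro l
    obtain ⟨h1, h2⟩ := hinv l
    have : p l < (1 + z) / (2 * z) := lt_of_le_of_lt h2 hM2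
    rw [lt_div_iff₀ hz2] at this; nlinarith
  set c : ℝ := 1 - z / 2 with hc
  have hc0 : 0 < c := by rw [hc]; linarith
  have hc1 : c < 1 := by rw [hc]; linarith
  have hdc : ∀ l, N ≤ l → 1 + z - 2 * z * p l ≤ c := by
    intro l hl
    have := hp34 l hl
    rw [hc]; nlinarith
  have hqpos : ∀ l, 0 < q l := by
    intro l; induction l with
    | zero => exact hq0
    | succ n ih => rw [hqrec]; exact div_pos ih (hd0 n)
  -- geometric growth
  have hgrow : ∀ k : ℕ, q N * (1/c)^k ≤ q (N + k) := by
    intro k; induction k with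
    | zero => simp
    | succ k ih =>
      have hd := hd0 (N + k)
      have hdc' := hdc (N + k) (Nat.le_add_right N k)
      have hqp := hqpos (N + k)
      have h1 : q (N + k) / c ≤ q (N + k) / (1 + z - 2 * z * p (N + k)) :=
        div_le_div_of_nonneg_left hqp.le hd hdc'
      have h2 : q N * (1/c)^(k+1) = (q N * (1/c)^k) / c := by
        rw [pow_succ]; ring
      calc q N * (1/c)^(k+1) = (q N * (1/c)^k) / c := h2
        _ ≤ q (N + k) / c := (div_le_div_iff_of_pos_right hc0).mpr ih
        _ ≤ q (N + k) / (1 + z - 2 * z * p (N + k)) := h1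
        _ = q (N + (k+1)) := (hqrec (N + k)).symm
  -- conclude
  have h1c : 1 < 1 / c := (one_lt_div hc0).mpr hc1
  have hpow : Tendsto (fun k : ℕ => q N * (1/c)^k) atTop atTop :=
    Tendsto.const_mul_atTop (hqpos N) (tendsto_pow_atTop_atTop_of_one_lt h1c)
  have hshift : Tendsto (fun k : ℕ => q (N + k)) atTop atTop :=
    tendsto_atTop_mono hgrow hpow
  have : Tendsto (fun k : ℕ => q (k + N)) atTop atTop := by
    simpa [Nat.add_comm] using hshift
  exact (tendsto_add_atTop_iff_nat N).mp this
end

section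
/- Let α > 0, h > 0, z = αh with z ≠ 1, and define F : ℝ² → ℝ² by F(p, q) = (α·p·(1 − p), α·(2p − 1)·q/(1 + z − 2z·p)) on the set where 1 + z − 2z·p ≠ 0. Then F(0,0) = F(1,0) = (0,0), the Jacobian matrix of F at (0, 0) is diag(α, −α/(1 + z)), and the Jacobian matrix of F at (1, 0) is diag(−α, α/(1 − z)). Moreover, the eigenvalues of both Jacobians are real, nonzero, and of opposite signs (i.e., both fixed points are hyperbolic saddles) if and only if 0 < z < 1. -/
/-!
Wherever the denominator `1 + z - 2zp` is nonzero, `F` coincides on a neighbourhood with the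
explicit rational map. Its `q`-component is linear in `q`, so at a point `(p, 0)` of the `p`-axis
the Jacobian is diagonal, with entries `α(1 - 2p)` and `α(2p - 1)/(1 + z - 2zp)`. At `(0, 0)` and
`(1, 0)` these are `α, -α/(1 + z)` and `-α, α/(1 - z)`: since `z = αh > 0` the first pair always
has opposite signs, and the second pair does exactly when `z < 1`.
-/

open ContinuousLinearMap Topology

section ProdDeriv

variable {𝕜 : Type*} [NontriviallyNormedField 𝕜]

theorem HasDerivAt.hasFDerivAt_comp_fst {f : 𝕜 → 𝕜} {f' p₀ : 𝕜} (hf : HasDerivAt f f' p₀)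
    (q₀ : 𝕜) : HasFDerivAt (fun x : 𝕜 × 𝕜 => f x.1) (f' • fst 𝕜 𝕜 𝕜) (p₀, q₀) :=
  hf.comp_hasFDerivAt (p₀, q₀) hasFDerivAt_fst

theorem DifferentiableAt.hasFDerivAt_mul_snd_of_snd_eq_zero {g : 𝕜 → 𝕜} {p₀ : 𝕜}
    (hg : DifferentiableAt 𝕜 g p₀) :
    HasFDerivAt (fun x : 𝕜 × 𝕜 => g x.1 * x.2) (g p₀ • snd 𝕜 𝕜 𝕜) (p₀, 0) :=
  ((hg.hasDerivAt.hasFDerivAt_comp_fst 0).mul hasFDerivAt_snd).congr_fderiv (by ext <;> simp)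

end ProdDeriv

noncomputable def eulerLogistic (α z : ℝ) (x : ℝ × ℝ) : ℝ × ℝ :=
  (α * x.1 * (1 - x.1), α * (2 * x.1 - 1) * x.2 / (1 + z - 2 * z * x.1))

theorem hasFDerivAt_eulerLogistic_mk_zero (α z p₀ : ℝ) (hD : 1 + z - 2 * z * p₀ ≠ 0) :
    HasFDerivAt (eulerLogistic α z)
      (((α * (1 - 2 * p₀)) • fst ℝ ℝ ℝ).prod
        ((α * (2 * p₀ - 1) / (1 + z - 2 * z * p₀)) • snd ℝ ℝ ℝ)) (p₀, 0) := by
  have hfst : HasDerivAt (fun p => α * p * (1 - p)) (α * (1 - 2 * p₀)) p₀ := by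
    have h := ((hasDerivAt_id' p₀).const_mul α).mul ((hasDerivAt_id' p₀).const_sub 1)
    rwa [show α * 1 * (1 - p₀) + α * p₀ * -1 = α * (1 - 2 * p₀) by ring] at h
  have hg : DifferentiableAt ℝ (fun p => α * (2 * p - 1) / (1 + z - 2 * z * p)) p₀ := by
    fun_prop (disch := exact hD)
  have hsnd : HasFDerivAt (fun x : ℝ × ℝ => α * (2 * x.1 - 1) * x.2 / (1 + z - 2 * z * x.1))
      ((α * (2 * p₀ - 1) / (1 + z - 2 * z * p₀)) • snd ℝ ℝ ℝ) (p₀, 0) := by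
    simpa only [mul_div_right_comm] using hg.hasFDerivAt_mul_snd_of_snd_eq_zero
  exact (hfst.hasFDerivAt_comp_fst 0).prodMk hsnd

theorem eventuallyEq_eulerLogistic {α z : ℝ} {F : ℝ × ℝ → ℝ × ℝ}
    (hF : ∀ x : ℝ × ℝ, 1 + z - 2 * z * x.1 ≠ 0 → F x = eulerLogistic α z x)
    {x₀ : ℝ × ℝ} (hD : 1 + z - 2 * z * x₀.1 ≠ 0) : F =ᶠ[𝓝 x₀] eulerLogistic α z := by
  have hcont : Continuous fun x : ℝ × ℝ => 1 + z - 2 * z * x.1 := by fun_prop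
  exact (hcont.continuousAt.eventually_ne hD).mono hF

theorem saddle_conditions_iff {α z : ℝ} (hα : 0 < α) (hz : 0 < z) :
    (α ≠ 0 ∧ -α / (1 + z) ≠ 0 ∧ α * (-α / (1 + z)) < 0 ∧
        -α ≠ 0 ∧ α / (1 - z) ≠ 0 ∧ (-α) * (α / (1 - z)) < 0) ↔ z < 1 := by
  have h_origin : α * (-α / (1 + z)) < 0 := by
    rw [mul_div_assoc']; exact div_neg_of_neg_of_pos (by nlinarith) (by linarith)
  have h_one : (-α) * (α / (1 - z)) < 0 ↔ z < 1 := by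
    rw [neg_mul, neg_lt_zero, mul_div_assoc', div_pos_iff_of_pos_left (by positivity), sub_pos]
  rw [← h_one]
  refine ⟨fun h => h.2.2.2.2.2, fun h => ?_⟩
  exact ⟨hα.ne', right_ne_zero_of_mul h_origin.ne, h_origin,
    left_ne_zero_of_mul h.ne, right_ne_zero_of_mul h.ne, h⟩

/-- The right-hand side `F` of the symplectic Euler discretization of
`ṗ = αp(1 − p), q̇ = α(2p − 1)q` has fixed points `(0,0)` and `(1,0)`, with Jacobians
`diag(α, −α/(1 + z))` and `diag(−α, α/(1 − z))`; both are hyperbolic saddles (real,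
nonzero eigenvalues of opposite signs) iff `0 < z < 1`. -/
theorem euler_logistic_saddles
    (α h : ℝ) (hα : 0 < α) (hh : 0 < h) (z : ℝ) (hz : z = α * h) (hz1 : z ≠ 1)
    (F : ℝ × ℝ → ℝ × ℝ)
    (hF : ∀ x : ℝ × ℝ, 1 + z - 2 * z * x.1 ≠ 0 →
      F x = (α * x.1 * (1 - x.1), α * (2 * x.1 - 1) * x.2 / (1 + z - 2 * z * x.1))) :
    F (0, 0) = (0, 0) ∧ F (1, 0) = (0, 0) ∧
    HasFDerivAt F
      ((α • ContinuousLinearMap.fst ℝ ℝ ℝ).prod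
        ((-α / (1 + z)) • ContinuousLinearMap.snd ℝ ℝ ℝ)) (0, 0) ∧
    HasFDerivAt F
      (((-α) • ContinuousLinearMap.fst ℝ ℝ ℝ).prod
        ((α / (1 - z)) • ContinuousLinearMap.snd ℝ ℝ ℝ)) (1, 0) ∧
    ((α ≠ 0 ∧ -α / (1 + z) ≠ 0 ∧ α * (-α / (1 + z)) < 0 ∧
        -α ≠ 0 ∧ α / (1 - z) ≠ 0 ∧ (-α) * (α / (1 - z)) < 0) ↔
      (0 < z ∧ z < 1)) := by
  have hz0 : 0 < z := hz ▸ mul_pos hα hh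
  have hD0 : 1 + z - 2 * z * (0 : ℝ) ≠ 0 := by linarith
  have hD1 : 1 + z - 2 * z * (1 : ℝ) ≠ 0 := fun h => hz1 (by linarith)
  refine ⟨?_, ?_, ?_, ?_, ?_⟩
  · rw [hF _ hD0]; norm_num
  · rw [hF _ hD1]; norm_num
  · have := hasFDerivAt_eulerLogistic_mk_zero α z 0 hD0
    norm_num at this
    exact this.congr_of_eventuallyEq (eventuallyEq_eulerLogistic hF hD0)
  · have := hasFDerivAt_eulerLogistic_mk_zero α z 1 hD1
    rw [show 1 + z - 2 * z * (1 : ℝ) = 1 - z by ring] at this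
    norm_num at this
    exact this.congr_of_eventuallyEq (eventuallyEq_eulerLogistic hF hD1)
  · rw [saddle_conditions_iff hα hz0, and_iff_right hz0]
end
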